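/- arXiv:1910.06665 — 2 statements merged into one kernel-verified Lean document; each statement's English description precedes it below -/
import Mathlib

section
/- Let M = (E,*,cx) be an oriented matroid, F ⊆ E with F = F*, and let L = cx(∅). For A ⊆ F the following are equivalent: (i) F = A ∪ A*, A ∩ A* = L ∩ F, and cx(A) ∩ F = A (A is a hemispace of the restriction of M to F); (ii) F = A ∪ A*, L ∩ F ⊆ A, and no circuit of M is contained in A \ L; (iii) A = H ∩ F for some hemispace H of M; (iv) A ∪ A* = F, cx(A) is a sharp of M, and L ∩ F ⊆ A. -/
/-- An oriented matroid: a ground set `E` with a fixed-point-free involution `star`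
and a finitary closure operator `cx` satisfying axioms (M4)-(M6). -/
structure OMatroid (E : Type*) where
  star : E → E
  cx : Set E → Set E
  star_star : ∀ x, star (star x) = x
  star_ne : ∀ x, star x ≠ x
  subset_cx : ∀ A : Set E, A ⊆ cx A
  cx_mono : ∀ ⦃A B : Set E⦄, A ⊆ B → cx A ⊆ cx B
  cx_cx : ∀ A : Set E, cx (cx A) = cx A
  finitary : ∀ (A : Set E) (x : E), x ∈ cx A → ∃ B ⊆ A, B.Finite ∧ x ∈ cx B
  cx_star : ∀ A : Set E, cx (star '' A) = star '' cx A
  M5 : ∀ (A : Set E) (x : E), x ∈ cx (A ∪ {star x}) → x ∈ cx A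
  M6 : ∀ (A : Set E) (x y : E), x ∈ cx (A ∪ {star y}) → x ∉ cx A →
        y ∈ cx ((A \ {y}) ∪ {star x})

namespace OMatroid

variable {E : Type*} (M : OMatroid E)

/-- A circuit: a minimal nonempty subset `C` with `C* ⊆ cx C`. -/
def IsCircuit (C : Set E) : Prop :=
  C.Nonempty ∧ M.star '' C ⊆ M.cx C ∧
    ∀ D ⊆ C, D.Nonempty → M.star '' D ⊆ M.cx D → D = C

/-- The set of loops. -/
def loops : Set E := M.cx ∅

def IsClosed (F : Set E) : Prop := M.cx F = F

/-- A sharp: a closed set `F` with `F ∩ F* = L`. -/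
def IsSharp (F : Set E) : Prop := M.IsClosed F ∧ F ∩ M.star '' F = M.loops

/-- A hemispace: a closed set `H` with `H ∪ H* = E` and `H ∩ H* = L`. -/
def IsHemispace (H : Set E) : Prop :=
  M.IsClosed H ∧ H ∪ M.star '' H = Set.univ ∧ H ∩ M.star '' H = M.loops

end OMatroid

/-!
A subset `A` of `F` that meets every opposite pair of `F` and contains `L ∩ F` is a hemispace
of the restriction exactly when `A \ L` contains no circuit. Indeed, if `x ∉ L` and both `x` and
`x*` lie in `cx A`, finitarity and (M6) produce a finite subset of `A \ L` that spans its own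
opposite, and a minimal such set is a circuit; so without circuits `cx A` is a sharp. By Zorn's
lemma a maximal sharp containing it is a hemispace `H` of `M`, because adjoining to a sharp an
element whose opposite is outside keeps it sharp (M5, M6), and then `H ∩ F = A` since the only
elements of `F` lying in `H` together with their opposites are loops.
-/

lemma Set.Finite.exists_subset_minimal {α : Type*} {B : Set α} (hB : B.Finite)
    {P : Set α → Prop} (hP : P B) : ∃ D ⊆ B, Minimal P D := by
  have hfin : {D | D ⊆ B ∧ P D}.Finite := hB.finite_subsets.subset fun _ h ↦ h.1
  obtain ⟨D, hDB, hD⟩ := hfin.exists_le_minimal ⟨subset_rfl, hP⟩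
  exact ⟨D, hDB, hD.1.2, fun D' hD' hle ↦ hD.2 ⟨hle.trans hDB, hD'⟩ hle⟩

namespace OMatroid

variable {E : Type*} (M : OMatroid E) {A B F H S : Set E} {x : E}

lemma star_involutive : Function.Involutive M.star := M.star_star

@[simp]
lemma image_star (A : Set E) : M.star '' A = M.star ⁻¹' A :=
  congrFun M.star_involutive.image_eq_preimage_symm A

@[simp]
lemma star_mem_loops : M.star x ∈ M.loops ↔ x ∈ M.loops := by
  have h := M.cx_star ∅
  simp only [Set.image_empty, image_star] at h
  rw [← Set.mem_preimage, loops, ← h]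

lemma loops_subset_cx (A : Set E) : M.loops ⊆ M.cx A := M.cx_mono (Set.empty_subset A)

lemma cx_subset_of_subset_cx (h : A ⊆ M.cx B) : M.cx A ⊆ M.cx B :=
  (M.cx_mono h).trans (M.cx_cx B).le

lemma cx_diff_loops (A : Set E) : M.cx (A \ M.loops) = M.cx A := by
  refine (M.cx_mono Set.sdiff_subset).antisymm (M.cx_subset_of_subset_cx fun a ha ↦ ?_)
  by_cases haL : a ∈ M.loops
  · exact M.loops_subset_cx _ haL
  · exact M.subset_cx _ ⟨ha, haL⟩

lemma isCircuit_of_minimal {C : Set E}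
    (hC : Minimal (fun D ↦ D.Nonempty ∧ M.star '' D ⊆ M.cx D) C) : M.IsCircuit C :=
  ⟨hC.1.1, hC.1.2, fun _ hDC hD hDs ↦ hC.eq_of_le ⟨hD, hDs⟩ hDC⟩

/-- A minimal set spanning both `x` and `x*` spans the opposite of each of its elements:
otherwise (M6) would exchange the offending element out of it. -/
lemma image_star_subset_cx_of_minimal {D : Set E}
    (hD : Minimal (fun D ↦ x ∈ M.cx D ∧ M.star x ∈ M.cx D) D) :
    M.star '' D ⊆ M.cx D := by
  rw [Set.image_subset_iff]
  intro b hb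
  by_contra hbD
  have hstays : ∀ z ∈ M.cx D, M.star z ∈ M.cx D → z ∈ M.cx (D \ {b}) := by
    intro z hz hz'
    by_contra hzb
    refine hbD (M.cx_subset_of_subset_cx ?_ (M.M6 (D \ {b}) z (M.star b) ?_ hzb))
    · rintro w (⟨⟨hw, -⟩, -⟩ | rfl)
      exacts [M.subset_cx D hw, hz']
    · rwa [M.star_star, Set.sdiff_union_self, Set.union_eq_self_of_subset_right
        (Set.singleton_subset_iff.2 hb)]
  have hsub := hD.le_of_le
    ⟨hstays x hD.1.1 hD.1.2, hstays (M.star x) hD.1.2 (by rw [M.star_star]; exact hD.1.1)⟩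
    Set.sdiff_subset
  exact (hsub hb).2 rfl

lemma exists_isCircuit_subset (hxL : x ∉ M.loops) (hx : x ∈ M.cx A)
    (hx' : M.star x ∈ M.cx A) : ∃ C ⊆ A \ M.loops, M.IsCircuit C := by
  rw [← M.cx_diff_loops] at hx hx'
  obtain ⟨B₁, hB₁, hB₁f, hxB₁⟩ := M.finitary _ x hx
  obtain ⟨B₂, hB₂, hB₂f, hxB₂⟩ := M.finitary _ (M.star x) hx'
  obtain ⟨D, hDB, hD⟩ := (hB₁f.union hB₂f).exists_subset_minimal
    (P := fun D ↦ x ∈ M.cx D ∧ M.star x ∈ M.cx D)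
    ⟨M.cx_mono Set.subset_union_left hxB₁, M.cx_mono Set.subset_union_right hxB₂⟩
  have hDne : D.Nonempty := by
    rw [Set.nonempty_iff_ne_empty]
    rintro rfl
    exact hxL hD.1.1
  obtain ⟨C, hCD, hC⟩ := ((hB₁f.union hB₂f).subset hDB).exists_subset_minimal
    (P := fun D ↦ D.Nonempty ∧ M.star '' D ⊆ M.cx D) ⟨hDne, M.image_star_subset_cx_of_minimal hD⟩
  exact ⟨C, hCD.trans (hDB.trans (Set.union_subset hB₁ hB₂)), M.isCircuit_of_minimal hC⟩

variable {M} in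
lemma IsClosed.loops_subset (hS : M.IsClosed S) : M.loops ⊆ S :=
  hS ▸ M.loops_subset_cx S

lemma isSharp_iff (hS : M.IsClosed S) :
    M.IsSharp S ↔ ∀ z ∈ S, M.star z ∈ S → z ∈ M.loops := by
  refine ⟨fun h z hz hz' ↦ h.2 ▸ ⟨hz, by simpa using hz'⟩, fun h ↦ ⟨hS, ?_⟩⟩
  refine subset_antisymm (fun z ⟨hz, hz'⟩ ↦ h z hz (by simpa using hz')) fun z hz ↦ ?_
  exact ⟨hS.loops_subset hz, by simpa using hS.loops_subset (M.star_mem_loops.2 hz)⟩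

lemma isSharp_cx_of_forall_not_isCircuit (h : ∀ C ⊆ A \ M.loops, ¬ M.IsCircuit C) :
    M.IsSharp (M.cx A) := by
  refine (M.isSharp_iff (M.cx_cx A)).2 fun z hz hz' ↦ ?_
  by_contra hzL
  obtain ⟨C, hC, hCirc⟩ := M.exists_isCircuit_subset hzL hz hz'
  exact h C hC hCirc

lemma isClosed_sUnion {c : Set (Set E)} (hne : c.Nonempty) (hdir : DirectedOn (· ⊆ ·) c)
    (hc : ∀ S ∈ c, M.IsClosed S) : M.IsClosed (⋃₀ c) := by
  refine Set.Subset.antisymm (fun z hz ↦ ?_) (M.subset_cx _)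
  obtain ⟨B, hBc, hBf, hzB⟩ := M.finitary _ z hz
  obtain ⟨S, hSc, hBS⟩ := hdir.exists_mem_subset_of_finite_of_subset_sUnion hne hBf hBc
  exact Set.subset_sUnion_of_mem hSc (hc S hSc ▸ M.cx_mono hBS hzB)

lemma isSharp_sUnion {c : Set (Set E)} (hne : c.Nonempty) (hchain : IsChain (· ⊆ ·) c)
    (hc : ∀ S ∈ c, M.IsSharp S) : M.IsSharp (⋃₀ c) := by
  refine (M.isSharp_iff (M.isClosed_sUnion hne hchain.directedOn fun S hS ↦ (hc S hS).1)).2 ?_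
  rintro z ⟨S₁, hS₁, hz₁⟩ ⟨S₂, hS₂, hz₂⟩
  obtain ⟨S, hS, h₁, h₂⟩ := hchain.directedOn S₁ hS₁ S₂ hS₂
  exact (M.isSharp_iff (hc S hS).1).1 (hc S hS) z (h₁ hz₁) (h₂ hz₂)

variable {M} in
/-- Adjoining to a sharp `S` an element `x` with `x* ∉ S` keeps it sharp: by (M6), an
opposite pair outside `S` in `cx (S ∪ {x})` would put `x*` there, hence in `S` by (M5). -/
lemma IsSharp.cx_insert (hS : M.IsSharp S) (hx' : M.star x ∉ S) :
    M.IsSharp (M.cx (insert x S)) := by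
  have hSG : S ⊆ M.cx (insert x S) := (Set.subset_insert x S).trans (M.subset_cx _)
  have hmem : ∀ w ∈ M.cx (insert x S), M.star w ∈ M.cx (insert x S) → w ∈ S := by
    intro w hw hw'
    by_contra hwS
    have hexch := M.M6 S w (M.star x)
      (by rwa [M.star_star, Set.union_singleton]) (by rwa [hS.1])
    rw [Set.sdiff_singleton_eq_self hx'] at hexch
    have hxG : M.star x ∈ M.cx (S ∪ {M.star (M.star x)}) := by
      rw [M.star_star, Set.union_singleton]
      refine M.cx_subset_of_subset_cx ?_ hexch
      rintro v (hv | rfl)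
      exacts [hSG hv, hw']
    exact hx' (hS.1 ▸ M.M5 S _ hxG)
  refine (M.isSharp_iff (M.cx_cx _)).2 fun z hz hz' ↦ ?_
  refine (M.isSharp_iff hS.1).1 hS z (hmem z hz hz') (hmem _ hz' ?_)
  rwa [M.star_star]

lemma isHemispace_of_maximal (hH : Maximal M.IsSharp H) : M.IsHemispace H := by
  refine ⟨hH.1.1, Set.eq_univ_of_forall fun x ↦ ?_, hH.1.2⟩
  by_contra hx
  simp only [image_star, Set.mem_union, Set.mem_preimage, not_or] at hx
  have hle := hH.le_of_ge (hH.1.cx_insert hx.2)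
    ((Set.subset_insert x H).trans (M.subset_cx _))
  exact hx.1 (hle (M.subset_cx _ (Set.mem_insert x H)))

variable {M} in
lemma IsSharp.exists_isHemispace_superset (hS : M.IsSharp S) :
    ∃ H, M.IsHemispace H ∧ S ⊆ H := by
  obtain ⟨H, hSH, hH⟩ := zorn_subset_nonempty {T | M.IsSharp T}
    (fun c hc hchain hne ↦ ⟨_, M.isSharp_sUnion hne hchain hc, fun _ ↦ Set.subset_sUnion_of_mem⟩)
    S hS
  exact ⟨H, M.isHemispace_of_maximal hH, hSH⟩

lemma not_isCircuit_of_cx_inter_subset (hF : M.star '' F = F) (hA : A ⊆ F)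
    (hcl : M.cx A ∩ F ⊆ A) (hAA : A ∩ M.star '' A ⊆ M.loops) {C : Set E}
    (hC : C ⊆ A \ M.loops) : ¬ M.IsCircuit C := by
  rintro ⟨⟨c, hc⟩, hCs, -⟩
  have hc' : M.star c ∈ A :=
    hcl ⟨M.cx_mono (fun w hw ↦ (hC hw).1) (hCs ⟨c, hc, rfl⟩),
      hF ▸ Set.mem_image_of_mem _ (hA (hC hc).1)⟩
  exact (hC hc).2 (hAA ⟨(hC hc).1, by simpa using hc'⟩)

lemma exists_isHemispace_inter_eq (hA : A ⊆ F) (hAF : A ∪ M.star '' A = F)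
    (hS : M.IsSharp (M.cx A)) (hL : M.loops ∩ F ⊆ A) :
    ∃ H, M.IsHemispace H ∧ A = H ∩ F := by
  obtain ⟨H, hH, hAH⟩ := hS.exists_isHemispace_superset
  refine ⟨H, hH, subset_antisymm (fun a ha ↦ ⟨hAH (M.subset_cx A ha), hA ha⟩) ?_⟩
  rintro z ⟨hzH, hzF⟩
  obtain hz | hz : z ∈ A ∪ M.star '' A := hAF ▸ hzF
  · exact hz
  · refine hL ⟨hH.2.2 ▸ ⟨hzH, ?_⟩, hzF⟩
    simp only [image_star, Set.mem_preimage] at hz ⊢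
    exact hAH (M.subset_cx A hz)

variable {M} in
lemma IsHemispace.inter (hH : M.IsHemispace H) (hF : M.star '' F = F) :
    F = H ∩ F ∪ M.star '' (H ∩ F) ∧ H ∩ F ∩ M.star '' (H ∩ F) = M.loops ∩ F ∧
      M.cx (H ∩ F) ∩ F = H ∩ F := by
  obtain ⟨hHc, hHu, hHi⟩ := hH
  simp only [image_star] at hF hHu hHi ⊢
  rw [Set.preimage_inter, hF, ← Set.union_inter_distrib_right, hHu, Set.univ_inter,
    Set.inter_inter_inter_comm, Set.inter_self, hHi]
  refine ⟨rfl, rfl, subset_antisymm ?_ (Set.subset_inter (M.subset_cx _) Set.inter_subset_right)⟩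
  exact Set.inter_subset_inter_left F ((M.cx_mono Set.inter_subset_left).trans (le_of_eq hHc))

end OMatroid

/-- characterization of the hemispaces of the restriction of an oriented
matroid `M` to a `*`-stable subset `F`. -/
theorem stmt_3 {E : Type*} (M : OMatroid E) (F : Set E) (hF : M.star '' F = F)
    (A : Set E) (hA : A ⊆ F) :
    List.TFAE
      [ F = A ∪ M.star '' A ∧ A ∩ M.star '' A = M.loops ∩ F ∧ M.cx A ∩ F = A,
        F = A ∪ M.star '' A ∧ M.loops ∩ F ⊆ A ∧
          ∀ C ⊆ A \ M.loops, ¬ M.IsCircuit C,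
        ∃ H : Set E, M.IsHemispace H ∧ A = H ∩ F,
        A ∪ M.star '' A = F ∧ M.IsSharp (M.cx A) ∧ M.loops ∩ F ⊆ A ] := by
  tfae_have 1 → 2 := fun ⟨hAF, hAA, hcl⟩ ↦
    ⟨hAF, hcl ▸ Set.inter_subset_inter_left F (M.loops_subset_cx A), fun _ ↦
      M.not_isCircuit_of_cx_inter_subset hF hA hcl.le (hAA.le.trans Set.inter_subset_left)⟩
  tfae_have 2 → 4 := fun ⟨hAF, hL, hC⟩ ↦
    ⟨hAF.symm, M.isSharp_cx_of_forall_not_isCircuit hC, hL⟩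
  tfae_have 4 → 3 := fun ⟨hAF, hS, hL⟩ ↦ M.exists_isHemispace_inter_eq hA hAF hS hL
  tfae_have 3 → 1 := by
    rintro ⟨H, hH, rfl⟩
    exact hH.inter hF
  tfae_finish
end

section
/- Let R = (G,Φ,Φ⁺) be a faithful signed groupoid set. A quadruple (x,w,y,z) of morphisms is a square if and only if xw = yz, x ∨ y = xw, and x⁻¹ ∨ w = x⁻¹y, where the joins are taken in the weak order at the relevant objects (and these joins exist in this situation). -/
open CategoryTheory

universe u v

/-- A signed groupoid set: a groupoid `G` acting on a family of definitely involuted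
sets `R a` (`a ∈ Ob G`), with involution `neg`, positive parts `pos a`, and the action
commuting with the involution. -/
structure SGS (G : Type u) [Groupoid G] (R : G → Type v) where
  neg : ∀ {a : G}, R a → R a
  pos : ∀ a : G, Set (R a)
  act : ∀ {a b : G}, (b ⟶ a) → R b → R a
  neg_neg : ∀ {a : G} (x : R a), neg (neg x) = x
  pos_iff : ∀ {a : G} (x : R a), x ∈ pos a ↔ neg x ∉ pos a
  act_id : ∀ {a : G} (x : R a), act (𝟙 a) x = x
  act_comp : ∀ {a b c : G} (g : c ⟶ b) (f : b ⟶ a) (x : R c),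
      act f (act g x) = act (g ≫ f) x
  act_neg : ∀ {a b : G} (f : b ⟶ a) (x : R b), act f (neg x) = neg (act f x)

/-- The morphisms of `G` with codomain `a`. -/
abbrev SHoms (G : Type u) [Groupoid G] (a : G) : Type _ := Σ b : G, (b ⟶ a)

namespace SGS

variable {G : Type u} [Groupoid G] {R : G → Type v} (S : SGS G R)

/-- The inversion set of a morphism `f : b ⟶ a`: positive roots at `a` sent to
negative roots at `b` by `f⁻¹`. -/
def Phi {a b : G} (f : b ⟶ a) : Set (R a) :=
  {α | α ∈ S.pos a ∧ S.act (Groupoid.inv f) α ∉ S.pos b}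

/-- The inversion set of an element of `SHoms G a`. -/
def PhiS {a : G} (g : SHoms G a) : Set (R a) := S.Phi g.2

/-- `S` is faithful if only identity morphisms have empty inversion set. -/
def Faithful : Prop :=
  ∀ ⦃a b : G⦄ (f : b ⟶ a), S.Phi f = ∅ → ∃ h : b = a, f = eqToHom h

/-- `j` is an upper bound of `F` in the weak order at `a`. -/
def IsUB {a : G} (F : Set (SHoms G a)) (j : SHoms G a) : Prop :=
  ∀ g ∈ F, S.PhiS g ⊆ S.PhiS j

/-- `j` is a least upper bound of `F` in the weak order at `a`. -/
def IsLUBw {a : G} (F : Set (SHoms G a)) (j : SHoms G a) : Prop :=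
  S.IsUB F j ∧ ∀ k : SHoms G a, S.IsUB F k → S.PhiS j ⊆ S.PhiS k

/-- `S` is complete: the weak order at every object is a complete lattice
(equivalently, every family of morphisms with a common codomain has a join). -/
def Complete : Prop := ∀ (a : G) (F : Set (SHoms G a)), ∃ j : SHoms G a, S.IsLUBw F j

/-- `S` is finite: finitely many objects, morphisms and roots. -/
def FiniteSGS (_S : SGS G R) : Prop :=
  Finite G ∧ (∀ a b : G, Finite (a ⟶ b)) ∧ ∀ a : G, Finite (R a)

/-- A square `(x, w, y, z)`: a commuting square `xw = yz` with `x(Φ_w) = Φ_y`. -/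
def Square {a b c d : G} (x : b ⟶ d) (w : a ⟶ b) (y : c ⟶ d) (z : a ⟶ c) : Prop :=
  w ≫ x = z ≫ y ∧ S.act x '' S.Phi w = S.Phi y

/-- The positive real roots at `a`: the union of all inversion sets at `a`. -/
def posRe (a : G) : Set (R a) := ⋃ g : SHoms G a, S.PhiS g

/-- An atomic morphism: an atom of the weak order at its codomain. -/
def Atomic {a : G} (g : SHoms G a) : Prop :=
  S.PhiS g ≠ ∅ ∧ ∀ h : SHoms G a, S.PhiS h ⊆ S.PhiS g →
    S.PhiS h = ∅ ∨ S.PhiS h = S.PhiS g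

/-- A simple morphism: one whose inversion set is a singleton. -/
def Simple {a b : G} (f : b ⟶ a) : Prop := ∃ α : R a, S.Phi f = {α}

/-- Interval finiteness: every interval `[1ₐ, g]` of a weak order is finite. -/
def IntervalFinite : Prop :=
  ∀ (a : G) (g : SHoms G a), {h : SHoms G a | S.PhiS h ⊆ S.PhiS g}.Finite

/-- Preprincipal: interval finite, and the inversion set of an atomic morphism is
contained in, or disjoint from, any other inversion set at the same object. -/
def Preprincipal : Prop :=
  S.IntervalFinite ∧ ∀ (a : G) (s g : SHoms G a), S.Atomic s →
    S.PhiS s ⊆ S.PhiS g ∨ S.PhiS s ∩ S.PhiS g = ∅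

/-- Antipodal: the weak order at each object has a maximum element. -/
def Antipodal : Prop :=
  ∀ a : G, ∃ ω : SHoms G a, ∀ g : SHoms G a, S.PhiS g ⊆ S.PhiS ω

end SGS

/-
Write `xw` for `w ≫ x`. By definition `α ∈ Φ_{xw}` iff `α > 0` and `w⁻¹x⁻¹α < 0`. Hence, when
`x(Φ_w)` consists of positive roots, `Φ_{xw} = Φ_x ∪ x(Φ_w)`; conversely `Φ_x ⊆ Φ_{xw}` forces
`x(Φ_w) > 0`, since a root `γ ∈ Φ_w` with `xγ < 0` puts `-xγ` into `Φ_x \ Φ_{xw}`.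
For a square `x(Φ_w) = Φ_y` and `x⁻¹(Φ_y) = Φ_w`, so `Φ_{xw} = Φ_x ∪ Φ_y` and
`Φ_{x⁻¹y} = Φ_{x⁻¹} ∪ Φ_w`: both joins are unions. Conversely, the two upper-bound conditions
alone give `x(Φ_w) ⊆ Φ_y` and, applied to `x⁻¹`, `x⁻¹(Φ_y) ⊆ Φ_w`.
-/

theorem CategoryTheory.Groupoid.inv_inv {G : Type u} [Groupoid G] {a b : G} (f : b ⟶ a) :
    Groupoid.inv (Groupoid.inv f) = f := by
  simp [Groupoid.inv_eq_inv]

namespace SGS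

variable {G : Type u} [Groupoid G] {R : G → Type v} (S : SGS G R)

lemma act_inv_act {a b : G} (f : b ⟶ a) (β : R b) :
    S.act (Groupoid.inv f) (S.act f β) = β := by
  rw [S.act_comp, Groupoid.comp_inv, S.act_id]

lemma act_act_inv {a b : G} (f : b ⟶ a) (α : R a) :
    S.act f (S.act (Groupoid.inv f) α) = α := by
  rw [S.act_comp, Groupoid.inv_comp, S.act_id]

lemma mem_image_act {a b : G} {f : b ⟶ a} {s : Set (R b)} {α : R a} :
    α ∈ S.act f '' s ↔ S.act (Groupoid.inv f) α ∈ s := by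
  rw [Set.image_eq_preimage_of_inverse (S.act_inv_act f) (S.act_act_inv f)]
  rfl

lemma neg_mem_pos {a : G} (α : R a) : S.neg α ∈ S.pos a ↔ α ∉ S.pos a := by
  rw [S.pos_iff (S.neg α), S.neg_neg]

lemma mem_Phi_comp {a b c : G} (g : c ⟶ b) (f : b ⟶ a) (α : R a) :
    α ∈ S.Phi (g ≫ f) ↔ α ∈ S.pos a ∧
      S.act (Groupoid.inv g) (S.act (Groupoid.inv f) α) ∉ S.pos c := by
  have h : Groupoid.inv (g ≫ f) = Groupoid.inv f ≫ Groupoid.inv g := by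
    simp [Groupoid.inv_eq_inv]
  simp only [Phi, Set.mem_ofPred_eq, h, ← S.act_comp]

lemma Phi_comp_eq_union {a b d : G} (x : b ⟶ d) (w : a ⟶ b)
    (h : S.act x '' S.Phi w ⊆ S.pos d) :
    S.Phi (w ≫ x) = S.Phi x ∪ S.act x '' S.Phi w := by
  ext α
  simp only [Set.mem_union, S.mem_Phi_comp, S.mem_image_act]
  by_cases hβ : S.act (Groupoid.inv x) α ∈ S.pos b
  · have hαx : α ∉ S.Phi x := fun hα => hα.2 hβ
    constructor
    · exact fun hα => Or.inr ⟨hβ, hα.2⟩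
    · rintro (hα | hα)
      · exact absurd hα hαx
      · exact ⟨h (S.mem_image_act.mpr hα), hα.2⟩
  · have hαw : S.act (Groupoid.inv x) α ∉ S.Phi w := fun hα => hβ hα.1
    refine ⟨fun hα => Or.inl ⟨hα.1, hβ⟩, ?_⟩
    rintro (hα | hα)
    · refine ⟨hα.1, fun hpos => ?_⟩
      -- otherwise `-x⁻¹α ∈ Φ_w`, so `-α = x(-x⁻¹α)` would be positive
      have hneg : S.neg (S.act (Groupoid.inv x) α) ∈ S.Phi w := by
        refine ⟨(S.neg_mem_pos _).mpr hβ, ?_⟩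
        rw [S.act_neg]
        exact (S.pos_iff _).mp hpos
      have := h ⟨_, hneg, by rw [S.act_neg, S.act_act_inv]⟩
      exact (S.neg_mem_pos α).mp this hα.1
    · exact absurd hα hαw

lemma image_act_Phi_subset_pos {a b d : G} {x : b ⟶ d} {w : a ⟶ b}
    (h : S.Phi x ⊆ S.Phi (w ≫ x)) : S.act x '' S.Phi w ⊆ S.pos d := by
  rintro _ ⟨γ, hγ, rfl⟩
  by_contra hneg
  have hx : S.neg (S.act x γ) ∈ S.Phi x := by
    refine ⟨(S.neg_mem_pos _).mpr hneg, ?_⟩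
    rw [S.act_neg, S.act_inv_act]
    exact (S.pos_iff γ).mp hγ.1
  have hxw := ((S.mem_Phi_comp w x _).mp (h hx)).2
  rw [S.act_neg, S.act_inv_act, S.act_neg] at hxw
  exact hxw ((S.neg_mem_pos _).mpr hγ.2)

lemma image_act_Phi_subset_Phi {a b c d : G} {x : b ⟶ d} {w : a ⟶ b} {y : c ⟶ d}
    (hx : S.Phi x ⊆ S.Phi (w ≫ x)) (hw : S.Phi w ⊆ S.Phi (y ≫ Groupoid.inv x)) :
    S.act x '' S.Phi w ⊆ S.Phi y := by
  rintro _ ⟨γ, hγ, rfl⟩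
  refine ⟨S.image_act_Phi_subset_pos hx ⟨γ, hγ, rfl⟩, ?_⟩
  simpa only [Groupoid.inv_inv] using ((S.mem_Phi_comp y (Groupoid.inv x) γ).mp (hw hγ)).2

lemma image_act_inv_Phi_eq {a b c d : G} {x : b ⟶ d} {w : a ⟶ b} {y : c ⟶ d}
    (h : S.act x '' S.Phi w = S.Phi y) : S.act (Groupoid.inv x) '' S.Phi y = S.Phi w := by
  ext β
  rw [← h, S.mem_image_act, Groupoid.inv_inv, S.mem_image_act, S.act_inv_act]

lemma isLUBw_pair {a : G} (g h j : SHoms G a) (e : S.PhiS j = S.PhiS g ∪ S.PhiS h) :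
    S.IsLUBw {g, h} j := by
  refine ⟨?_, fun k hk => ?_⟩
  · rintro k (rfl | rfl) <;> rw [e]
    exacts [Set.subset_union_left, Set.subset_union_right]
  · rw [e]
    exact Set.union_subset (hk g (Set.mem_insert _ _)) (hk h (Set.mem_insert_of_mem _ rfl))

lemma isLUBw_comp_of_image_act_Phi_eq {a b c d : G} {x : b ⟶ d} {w : a ⟶ b} {y : c ⟶ d}
    (h : S.act x '' S.Phi w = S.Phi y) :
    S.IsLUBw ({⟨b, x⟩, ⟨c, y⟩} : Set (SHoms G d)) ⟨a, w ≫ x⟩ := by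
  refine S.isLUBw_pair _ _ _ ?_
  have hpos : S.act x '' S.Phi w ⊆ S.pos d := h ▸ fun _ hα => hα.1
  simp only [PhiS]
  rw [S.Phi_comp_eq_union x w hpos, h]

end SGS

theorem stmt_9_general {G : Type u} [Groupoid G] {R : G → Type v} (S : SGS G R)
    {a b c d : G}
    (x : b ⟶ d) (w : a ⟶ b) (y : c ⟶ d) (z : a ⟶ c) :
    S.Square x w y z ↔
      (w ≫ x = z ≫ y ∧
       S.IsLUBw ({⟨b, x⟩, ⟨c, y⟩} : Set (SHoms G d)) ⟨a, w ≫ x⟩ ∧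
       S.IsLUBw ({⟨d, Groupoid.inv x⟩, ⟨a, w⟩} : Set (SHoms G b))
         ⟨c, y ≫ Groupoid.inv x⟩) := by
  constructor
  · rintro ⟨hcomm, h⟩
    exact ⟨hcomm, S.isLUBw_comp_of_image_act_Phi_eq h,
      S.isLUBw_comp_of_image_act_Phi_eq (S.image_act_inv_Phi_eq h)⟩
  · rintro ⟨hcomm, ⟨hxy, -⟩, ⟨hxw, -⟩⟩
    have hx : S.Phi x ⊆ S.Phi (w ≫ x) := hxy _ (Set.mem_insert _ _)
    have hy : S.Phi y ⊆ S.Phi (w ≫ Groupoid.inv (Groupoid.inv x)) := by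
      rw [Groupoid.inv_inv]
      exact hxy _ (Set.mem_insert_of_mem _ rfl)
    have hxinv : S.Phi (Groupoid.inv x) ⊆ S.Phi (y ≫ Groupoid.inv x) :=
      hxw _ (Set.mem_insert _ _)
    have hw : S.Phi w ⊆ S.Phi (y ≫ Groupoid.inv x) := hxw _ (Set.mem_insert_of_mem _ rfl)
    refine ⟨hcomm, (S.image_act_Phi_subset_Phi hx hw).antisymm fun δ hδ => ?_⟩
    exact S.mem_image_act.mpr (S.image_act_Phi_subset_Phi hxinv hy ⟨δ, hδ, rfl⟩)

/-- `(x,w,y,z)` is a square iff `xw = yz`, `x ∨ y = xw` and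
`x⁻¹ ∨ w = x⁻¹y` (joins in the weak orders at the relevant objects). -/
theorem stmt_9 {G : Type u} [Groupoid G] {R : G → Type v} (S : SGS G R)
    (hfa : S.Faithful) {a b c d : G}
    (x : b ⟶ d) (w : a ⟶ b) (y : c ⟶ d) (z : a ⟶ c) :
    S.Square x w y z ↔
      (w ≫ x = z ≫ y ∧
       S.IsLUBw ({⟨b, x⟩, ⟨c, y⟩} : Set (SHoms G d)) ⟨a, w ≫ x⟩ ∧
       S.IsLUBw ({⟨d, Groupoid.inv x⟩, ⟨a, w⟩} : Set (SHoms G b))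
         ⟨c, y ≫ Groupoid.inv x⟩) :=
  stmt_9_general S x w y z
end
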